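/- The cumulativity relation of ECC is well-founded on the set of normalisable terms: there is no infinite strictly decreasing sequence A_0 ≻ A_1 ≻ … in which every A_n has a normal form. -/

import Mathlib

namespace ECC

/-- Terms of Luo's Extended Calculus of Constructions, in de Bruijn representation. -/
inductive Term : Type
  | var   : ℕ → Term
  | prop  : Term
  | type  : ℕ → Term
  | pi    : Term → Term → Term
  | sigma : Term → Term → Term
  | lam   : Term → Term → Term
  | app   : Term → Term → Term
  | pair  : Term → Term → Term → Term   -- ⟨M, N⟩_B with type annotation B
  | proj1 : Term → Term
  | proj2 : Term → Term
deriving DecidableEq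

/-- Lift (shift by `d`) all de Bruijn indices ≥ `k`. -/
def lift (d : ℕ) : ℕ → Term → Term
  | k, .var n       => if n < k then .var n else .var (n + d)
  | _, .prop        => .prop
  | _, .type j      => .type j
  | k, .pi A B      => .pi (lift d k A) (lift d (k+1) B)
  | k, .sigma A B   => .sigma (lift d k A) (lift d (k+1) B)
  | k, .lam A M     => .lam (lift d k A) (lift d (k+1) M)
  | k, .app M N     => .app (lift d k M) (lift d k N)
  | k, .pair M N B  => .pair (lift d k M) (lift d k N) (lift d k B)
  | k, .proj1 M     => .proj1 (lift d k M)
  | k, .proj2 M     => .proj2 (lift d k M)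

/-- Capture-avoiding substitution `[N/x]A` of the term `N` for the variable `x` in `A`. -/
def subst (N : Term) : ℕ → Term → Term
  | k, .var n       => if n < k then .var n else if n = k then lift k 0 N else .var (n - 1)
  | _, .prop        => .prop
  | _, .type j      => .type j
  | k, .pi A B      => .pi (subst N k A) (subst N (k+1) B)
  | k, .sigma A B   => .sigma (subst N k A) (subst N (k+1) B)
  | k, .lam A M     => .lam (subst N k A) (subst N (k+1) M)
  | k, .app M M'    => .app (subst N k M) (subst N k M')
  | k, .pair M M' B => .pair (subst N k M) (subst N k M') (subst N k B)
  | k, .proj1 M     => .proj1 (subst N k M)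
  | k, .proj2 M     => .proj2 (subst N k M)

/-- `[N/x₀]B` : substitution for the outermost bound variable. -/
def subst0 (B N : Term) : Term := subst N 0 B

/-- One-step reduction (β together with the projection reductions, closed under all
term-formation congruences). -/
inductive Red : Term → Term → Prop
  | beta    : Red (.app (.lam A M) N) (subst0 M N)
  | pr1     : Red (.proj1 (.pair M N B)) M
  | pr2     : Red (.proj2 (.pair M N B)) N
  | piL     : Red A A' → Red (.pi A B) (.pi A' B)
  | piR     : Red B B' → Red (.pi A B) (.pi A B')
  | sigmaL  : Red A A' → Red (.sigma A B) (.sigma A' B)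
  | sigmaR  : Red B B' → Red (.sigma A B) (.sigma A B')
  | lamL    : Red A A' → Red (.lam A M) (.lam A' M)
  | lamR    : Red M M' → Red (.lam A M) (.lam A M')
  | appL    : Red M M' → Red (.app M N) (.app M' N)
  | appR    : Red N N' → Red (.app M N) (.app M N')
  | pairL   : Red M M' → Red (.pair M N B) (.pair M' N B)
  | pairR   : Red N N' → Red (.pair M N B) (.pair M N' B)
  | pairB   : Red B B' → Red (.pair M N B) (.pair M N B')
  | proj1C  : Red M M' → Red (.proj1 M) (.proj1 M')
  | proj2C  : Red M M' → Red (.proj2 M) (.proj2 M')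

/-- Conversion `≃` : the equivalence relation generated by reduction. -/
def Conv : Term → Term → Prop := Relation.EqvGen Red

/-- `A` has a normal form. -/
def HasNF (A : Term) : Prop :=
  ∃ B, Relation.ReflTransGen Red A B ∧ ∀ C, ¬ Red B C

/-- `𝒯` : the set of normalisable terms. -/
def Tset : Set Term := {A | HasNF A}

/-- Universes are `Prop` and the `Type_j`. -/
def IsUniv (T : Term) : Prop := T = .prop ∨ ∃ j, T = .type j

/-- The cumulativity relation `⪯` : the smallest preorder containing conversion,
the universe order, congruence for Π in the codomain, and congruence for Σ in both
components. -/
inductive Cum : Term → Term → Prop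
  | conv     : Conv A B → Cum A B
  | propType : Cum .prop (.type 0)
  | typeType : j ≤ k → Cum (.type j) (.type k)
  | pi       : Conv A A' → Cum B B' → Cum (.pi A B) (.pi A' B')
  | sigma    : Cum A A' → Cum B B' → Cum (.sigma A B) (.sigma A' B')
  | trans    : Cum A B → Cum B C → Cum A C

/-- The strict cumulativity relation `≺` : `A ⪯ B` and `A ≄ B`. -/
def SCum (A B : Term) : Prop := Cum A B ∧ ¬ Conv A B

/-- The stratified cumulativity relations `⪯ᵢ`. -/
inductive CumL : ℕ → Term → Term → Prop
  | conv     : Conv A B → CumL i A B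
  | propType : CumL i .prop (.type j)
  | typeType : j < k → CumL i (.type j) (.type k)
  | succ     : CumL i A B → CumL (i+1) A B
  | pi       : Conv M (.pi A B) → Conv N (.pi A' B') → Conv A A' → CumL i B B' →
               CumL (i+1) M N
  | sigma    : Conv M (.sigma A B) → Conv N (.sigma A' B') → CumL i A A' → CumL i B B' →
               CumL (i+1) M N

/-- Strict stratified cumulativity `≺ᵢ`. -/
def SCumL (i : ℕ) (A B : Term) : Prop := CumL i A B ∧ ¬ Conv A B

/-- Is the outermost symbol of a term Π or Σ? -/
def BinderHeaded : Term → Prop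
  | .pi _ _    => True
  | .sigma _ _ => True
  | _          => False

/-- The base stratum: normalisable terms not convertible to a binder-headed
normalisable term. -/
def Base : Set Term :=
  {T | HasNF T ∧ ¬ ∃ B, HasNF B ∧ BinderHeaded B ∧ Conv T B}

/-- The stratification `(Π_n, Σ_n)` of `𝒯`. -/
def Strata : ℕ → Set Term × Set Term
  | 0 => (Base, Base)
  | n+1 =>
    ({T | ∃ k l, ∃ _ : k + l = n, ∃ A B, HasNF (Term.pi A B) ∧ Conv T (Term.pi A B) ∧
        A ∈ (Strata k).1 ∪ (Strata k).2 ∧ B ∈ (Strata l).1 ∪ (Strata l).2},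
     {T | ∃ k l, ∃ _ : k + l = n, ∃ A B, HasNF (Term.sigma A B) ∧ Conv T (Term.sigma A B) ∧
        A ∈ (Strata k).1 ∪ (Strata k).2 ∧ B ∈ (Strata l).1 ∪ (Strata l).2})
termination_by n => n
decreasing_by all_goals omega

/-- The stratum `Π_n`. -/
def PiStr (n : ℕ) : Set Term := (Strata n).1

/-- The stratum `Σ_n`. -/
def SigStr (n : ℕ) : Set Term := (Strata n).2

/-- The specification of the rank function `φ : 𝒯 → ω`. -/
def PhiSpec (φ : Term → ℕ) : Prop :=
  (∀ M N, HasNF M → HasNF N → Conv M N → φ M = φ N) ∧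
  (∀ T, HasNF T → Conv T .prop → φ T = 2) ∧
  (∀ T j, HasNF T → Conv T (.type j) → φ T = 3 + j) ∧
  (∀ T, T ∈ PiStr 0 → ¬ Conv T .prop → (∀ j, ¬ Conv T (.type j)) → φ T = 1) ∧
  (∀ T A B, HasNF T → (Conv T (.pi A B) ∨ Conv T (.sigma A B)) → φ T = φ A * φ B) ∧
  (∀ T, HasNF T → 0 < φ T)

mutual
/-- Valid contexts of ECC (de Bruijn: the head of the list is the most recent entry). -/
inductive Valid : List Term → Prop
  | nil  : Valid []
  | cons : Typing Γ A (.type j) → Valid (A :: Γ)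

/-- The typing judgement `Γ ⊢ M : A` of ECC. -/
inductive Typing : List Term → Term → Term → Prop
  | prop  : Valid Γ → Typing Γ .prop (.type 0)
  | type  : Valid Γ → Typing Γ (.type j) (.type (j+1))
  | var   : Valid Γ → Γ[n]? = some A → Typing Γ (.var n) (lift (n+1) 0 A)
  | pi1   : Typing Γ A (.type j) → Typing (A :: Γ) B .prop →
            Typing Γ (.pi A B) .prop
  | pi2   : Typing Γ A (.type j) → Typing (A :: Γ) B (.type j) →
            Typing Γ (.pi A B) (.type j)
  | sig   : Typing Γ A (.type j) → Typing (A :: Γ) B (.type j) →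
            Typing Γ (.sigma A B) (.type j)
  | lam   : Typing (A :: Γ) M B → Typing Γ (.lam A M) (.pi A B)
  | app   : Typing Γ M (.pi A B) → Typing Γ N A → Typing Γ (.app M N) (subst0 B N)
  | pair  : Typing Γ M A → Typing Γ N (subst0 B M) → Typing (A :: Γ) B (.type j) →
            Typing Γ (.pair M N (.sigma A B)) (.sigma A B)
  | proj1 : Typing Γ M (.sigma A B) → Typing Γ (.proj1 M) A
  | proj2 : Typing Γ M (.sigma A B) → Typing Γ (.proj2 M) (subst0 B (.proj1 M))
  | cum   : Typing Γ M A → Typing Γ B (.type j) → Cum A B → Typing Γ M B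
end

/-- `Type_j` for `j ∈ ℤ`, with the convention `Type_{-1} = Prop`. -/
def TType (j : ℤ) : Term := if j < 0 then .prop else .type j.toNat

/-- The typing judgement of the restricted system `ECC⁻`: the rules
`(Π2)(Σ)(app)(pair)(⪯)` of ECC are replaced by `(Π2')(Σ')(app')(pair')` and `(≃)_ρ`. -/
inductive TypingM : List Term → Term → Term → Prop
  | prop  : Valid Γ → TypingM Γ .prop (.type 0)
  | type  : Valid Γ → TypingM Γ (.type j) (.type (j+1))
  | var   : Valid Γ → Γ[n]? = some A → TypingM Γ (.var n) (lift (n+1) 0 A)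
  | pi1   : TypingM Γ A (.type j) → TypingM (A :: Γ) B .prop →
            TypingM Γ (.pi A B) .prop
  | pi2'  : TypingM Γ A (TType j) → TypingM (A :: Γ) B (TType k) → 0 ≤ k →
            TypingM Γ (.pi A B) (TType (max (max j k) 0))
  | sig'  : TypingM Γ A (TType j) → TypingM (A :: Γ) B (TType k) →
            TypingM Γ (.sigma A B) (TType (max (max j k) 0))
  | lam   : TypingM (A :: Γ) M B → TypingM Γ (.lam A M) (.pi A B)
  | app'  : TypingM Γ M (.pi A B) → TypingM Γ N A' → Cum A' A →
            TypingM Γ (.app M N) (subst0 B N)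
  | pair' : TypingM Γ M A → TypingM Γ N C → TypingM (A' :: Γ) B' (.type j) →
            Cum A A' → Cum C (subst0 B' M) →
            TypingM Γ (.pair M N (.sigma A' B')) (.sigma A' B')
  | proj1 : TypingM Γ M (.sigma A B) → TypingM Γ (.proj1 M) A
  | proj2 : TypingM Γ M (.sigma A B) → TypingM Γ (.proj2 M) (subst0 B (.proj1 M))
  | conv  : TypingM Γ M A → Conv A A' → Typing Γ A' (.type j) → TypingM Γ M A'

end ECC

/-!
Send a normalisable term to `φ` of its normal form, where `φ Prop = 2`, `φ Type_j = j + 3`,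
`φ (Πx:A.B) = φ (Σx:A.B) = φ A * φ B` and `φ T = 1` for every other normal term. By
Church–Rosser (via Takahashi's complete developments) normal forms are unique up to conversion,
so this rank is invariant under `≃`. Since all ranks are positive, products are strictly
monotone in each factor, and induction on `⪯` shows that `A ⪯ B` with `A` normalisable gives
`A ≃ B` or a strictly smaller rank for `A`. A descending chain would therefore give a strictly
decreasing sequence of natural numbers.
-/

namespace ECC

section Substitution

lemma lift_lift_of_le (d j : ℕ) (N : Term) : ∀ k i, i ≤ k →
    lift d (k + j) (lift j i N) = lift j i (lift d k N) := by
  induction N with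
  | var n =>
    intro k i h
    simp only [lift]
    split_ifs <;> simp only [lift] <;> split_ifs <;> first | rfl | omega | (congr 1; omega)
  | prop | type => intros; rfl
  | _ =>
    intro k i h
    simp only [lift, Nat.add_right_comm _ _ 1]
    congr 1 <;> apply_assumption <;> omega

lemma lift_lift_add (j e : ℕ) (N : Term) : ∀ l i, l ≤ i → i ≤ l + e →
    lift j i (lift e l N) = lift (j + e) l N := by
  induction N with
  | var n =>
    intro l i h1 h2
    simp only [lift]
    split_ifs <;> simp only [lift] <;> split_ifs <;> first | rfl | omega | (congr 1; omega)
  | prop | type => intros; rfl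
  | _ =>
    intro l i h1 h2
    simp only [lift]
    congr 1 <;> apply_assumption <;> omega

lemma lift_subst (d : ℕ) (N M : Term) : ∀ j m,
    lift d (j + m) (subst N j M) = subst (lift d m N) j (lift d (j + m + 1) M) := by
  induction M with
  | var n =>
    intro j m
    simp only [lift, subst]
    split_ifs <;> simp only [lift, subst] <;> split_ifs <;>
      first
      | rfl | omega | (congr 1; omega)
      | (rw [Nat.add_comm j m]; exact lift_lift_of_le d j N m 0 (Nat.zero_le m))
  | prop | type => intros; rfl
  | _ =>
    intro j m
    simp only [lift, subst]
    congr 1 <;> first | apply_assumption | (rw [Nat.add_right_comm j m 1]; apply_assumption)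

lemma subst_lift (N Q : Term) (j : ℕ) : ∀ m i, i ≤ m →
    subst N (j + m) (lift j i Q) = lift j i (subst N m Q) := by
  induction Q with
  | var n =>
    intro m i h
    simp only [lift, subst]
    split_ifs <;> simp only [lift, subst] <;> split_ifs <;>
      first
      | rfl | omega | (congr 1; omega)
      | rw [lift_lift_add j m N 0 i (Nat.zero_le i) (by omega)]
  | prop | type => intros; rfl
  | _ =>
    intro m i h
    simp only [lift, subst]
    congr 1 <;> first | (apply_assumption; omega) | (rw [Nat.add_assoc]; apply_assumption; omega)

lemma subst_lift_succ (X N : Term) (e : ℕ) : ∀ k j, k ≤ j → j ≤ k + e →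
    subst X j (lift (e + 1) k N) = lift e k N := by
  induction N with
  | var n =>
    intro k j h1 h2
    simp only [lift]
    split_ifs <;> simp only [subst] <;> split_ifs <;> first | rfl | omega
  | prop | type => intros; rfl
  | _ =>
    intro k j h1 h2
    simp only [lift, subst]
    congr 1 <;> apply_assumption <;> omega

lemma subst_subst (N Q P : Term) : ∀ j m,
    subst N (j + m) (subst Q j P) = subst (subst N m Q) j (subst N (j + m + 1) P) := by
  induction P with
  | var n =>
    intro j m
    simp only [subst]
    split_ifs <;> (try simp only [subst]) <;> (try split_ifs) <;>
      first
      | rfl | omega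
      | exact subst_lift N Q j m 0 (Nat.zero_le m)
      | rw [subst_lift_succ (subst N m Q) N (j + m) 0 j (Nat.zero_le j) (by omega)]
  | prop | type => intros; rfl
  | _ =>
    intro j m
    simp only [subst]
    congr 1 <;> first | apply_assumption | (rw [Nat.add_right_comm j m 1]; apply_assumption)

lemma lift_subst0 (d k : ℕ) (M N : Term) :
    lift d k (subst0 M N) = subst0 (lift d (k + 1) M) (lift d k N) := by
  simpa [subst0] using lift_subst d N M 0 k

lemma subst_subst0 (N M P : Term) (k : ℕ) :
    subst N k (subst0 M P) = subst0 (subst N (k + 1) M) (subst N k P) := by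
  simpa [subst0] using subst_subst N P M 0 k

end Substitution

abbrev Reds : Term → Term → Prop := Relation.ReflTransGen Red

lemma Reds.map (f : Term → Term) (hf : ∀ {a b}, Red a b → Red (f a) (f b)) {a b : Term}
    (h : Reds a b) : Reds (f a) (f b) :=
  Relation.ReflTransGen.lift f (fun _ _ => hf) _ _ h

inductive Par : Term → Term → Prop
  | var   : Par (.var n) (.var n)
  | prop  : Par .prop .prop
  | type  : Par (.type j) (.type j)
  | pi    : Par A A' → Par B B' → Par (.pi A B) (.pi A' B')
  | sigma : Par A A' → Par B B' → Par (.sigma A B) (.sigma A' B')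
  | lam   : Par A A' → Par M M' → Par (.lam A M) (.lam A' M')
  | app   : Par M M' → Par N N' → Par (.app M N) (.app M' N')
  | pair  : Par M M' → Par N N' → Par B B' → Par (.pair M N B) (.pair M' N' B')
  | proj1 : Par M M' → Par (.proj1 M) (.proj1 M')
  | proj2 : Par M M' → Par (.proj2 M) (.proj2 M')
  | beta  : Par M M' → Par N N' → Par (.app (.lam A M) N) (subst0 M' N')
  | pr1   : Par M M' → Par (.proj1 (.pair M N B)) M'
  | pr2   : Par N N' → Par (.proj2 (.pair M N B)) N'

namespace Par

lemma refl (M : Term) : Par M M := by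
  induction M <;> constructor <;> assumption

lemma of_red {M N : Term} (h : Red M N) : Par M N := by
  induction h <;> constructor <;> first | assumption | exact refl _

lemma reds {M N : Term} (h : Par M N) : Reds M N := by
  induction h with
  | var | prop | type => exact .refl
  | pi _ _ ihA ihB => exact (ihA.map (.pi · _) Red.piL).trans (ihB.map (.pi _ ·) Red.piR)
  | sigma _ _ ihA ihB =>
    exact (ihA.map (.sigma · _) Red.sigmaL).trans (ihB.map (.sigma _ ·) Red.sigmaR)
  | lam _ _ ihA ihM => exact (ihA.map (.lam · _) Red.lamL).trans (ihM.map (.lam _ ·) Red.lamR)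
  | app _ _ ihM ihN => exact (ihM.map (.app · _) Red.appL).trans (ihN.map (.app _ ·) Red.appR)
  | pair _ _ _ ihM ihN ihB =>
    exact ((ihM.map (.pair · _ _) Red.pairL).trans (ihN.map (.pair _ · _) Red.pairR)).trans
      (ihB.map (.pair _ _ ·) Red.pairB)
  | proj1 _ ih => exact ih.map _ Red.proj1C
  | proj2 _ ih => exact ih.map _ Red.proj2C
  | beta _ _ ihM ihN =>
    exact ((ihM.map (fun M => .app (.lam _ M) _) (Red.appL ∘ Red.lamR)).trans
      (ihN.map (.app _ ·) Red.appR)).tail Red.beta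
  | pr1 _ ih =>
    exact (ih.map (fun M => .proj1 (.pair M _ _)) (Red.proj1C ∘ Red.pairL)).tail Red.pr1
  | pr2 _ ih =>
    exact (ih.map (fun N => .proj2 (.pair _ N _)) (Red.proj2C ∘ Red.pairR)).tail Red.pr2

lemma lift {M M' : Term} (h : Par M M') (d : ℕ) :
    ∀ k, Par (ECC.lift d k M) (ECC.lift d k M') := by
  induction h with
  | var => intro k; simp only [ECC.lift]; split_ifs <;> exact var
  | beta _ _ ihM ihN => intro k; rw [lift_subst0]; exact beta (ihM (k + 1)) (ihN k)
  | pr1 _ ih => intro k; exact pr1 (ih k)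
  | pr2 _ ih => intro k; exact pr2 (ih k)
  | _ => intro k; simp only [ECC.lift]; constructor <;> apply_assumption

lemma subst {N N' M M' : Term} (hN : Par N N') (h : Par M M') :
    ∀ k, Par (ECC.subst N k M) (ECC.subst N' k M') := by
  induction h with
  | var => intro k; simp only [ECC.subst]; split_ifs <;> first | exact var | exact hN.lift _ _
  | beta _ _ ihM ihN =>
    intro k; rw [subst_subst0]; exact beta (ihM (k + 1)) (ihN k)
  | pr1 _ ih => intro k; exact pr1 (ih k)
  | pr2 _ ih => intro k; exact pr2 (ih k)
  | _ => intro k; simp only [ECC.subst]; constructor <;> apply_assumption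

end Par

def dev : Term → Term
  | .var n => .var n
  | .prop => .prop
  | .type j => .type j
  | .pi A B => .pi (dev A) (dev B)
  | .sigma A B => .sigma (dev A) (dev B)
  | .lam A M => .lam (dev A) (dev M)
  | .app (.lam _ M) N => subst0 (dev M) (dev N)
  | .app M N => .app (dev M) (dev N)
  | .pair M N B => .pair (dev M) (dev N) (dev B)
  | .proj1 (.pair M _ _) => dev M
  | .proj1 M => .proj1 (dev M)
  | .proj2 (.pair _ N _) => dev N
  | .proj2 M => .proj2 (dev M)

lemma Par.par_dev {M N : Term} (h : Par M N) : Par N (dev M) := by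
  induction h with
  | @app M _ _ _ hM _ ihM ihN =>
    cases M with
    | lam =>
      cases hM with | lam => cases ihM with | lam _ hP => exact beta hP ihN
    | _ => exact app ihM ihN
  | @proj1 M _ hM ihM =>
    cases M with
    | pair =>
      cases hM with | pair => cases ihM with | pair hP _ _ => exact pr1 hP
    | _ => exact proj1 ihM
  | @proj2 M _ hM ihM =>
    cases M with
    | pair =>
      cases hM with | pair => cases ihM with | pair _ hQ _ => exact pr2 hQ
    | _ => exact proj2 ihM
  | beta _ _ ihM ihN => exact ihN.subst ihM 0
  | pr1 _ ih | pr2 _ ih => exact ih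
  | _ => constructor <;> assumption

section Confluence

lemma reflTransGen_par_eq_reds : Relation.ReflTransGen Par = Reds :=
  le_antisymm (Relation.reflTransGen_closed fun _ _ => Par.reds)
    (Relation.ReflTransGen.mono fun _ _ => Par.of_red)

lemma equivalence_join_reds : Equivalence (Relation.Join Reds) := by
  rw [← reflTransGen_par_eq_reds]
  exact Relation.equivalence_join_reflTransGen fun a _ _ hb hc =>
    ⟨dev a, .single hb.par_dev, .single hc.par_dev⟩

lemma Conv.join {M N : Term} (h : Conv M N) : Relation.Join Reds M N :=
  equivalence_join_reds.eqvGen_iff.mp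
    (Relation.EqvGen.mono (fun _ b h => ⟨b, .single h, .refl⟩) _ _ h)

lemma Reds.conv {M N : Term} (h : Reds M N) : Conv M N :=
  Relation.EqvGen.reflTransGen_le_eqvGen _ _ _ h

lemma Conv.symm {M N : Term} (h : Conv M N) : Conv N M := Relation.EqvGen.symm _ _ h

lemma Conv.trans {M N P : Term} (h₁ : Conv M N) (h₂ : Conv N P) : Conv M P :=
  Relation.EqvGen.trans _ _ _ h₁ h₂

lemma Conv.map (f : Term → Term) (hf : ∀ {a b}, Red a b → Red (f a) (f b)) {a b : Term}
    (h : Conv a b) : Conv (f a) (f b) := by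
  induction h with
  | rel _ _ h => exact .rel _ _ (hf h)
  | refl => exact .refl _
  | symm _ _ _ ih => exact ih.symm
  | trans _ _ _ _ _ ih₁ ih₂ => exact ih₁.trans ih₂

lemma Conv.pi {A A' B B' : Term} (hA : Conv A A') (hB : Conv B B') :
    Conv (.pi A B) (.pi A' B') :=
  (hA.map (.pi · B) Red.piL).trans (hB.map (.pi A' ·) Red.piR)

lemma Conv.sigma {A A' B B' : Term} (hA : Conv A A') (hB : Conv B B') :
    Conv (.sigma A B) (.sigma A' B') :=
  (hA.map (.sigma · B) Red.sigmaL).trans (hB.map (.sigma A' ·) Red.sigmaR)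

end Confluence

section NormalForms

def Normal (T : Term) : Prop := ∀ C, ¬ Red T C

lemma Normal.eq_of_reds {M N : Term} (hM : Normal M) (h : Reds M N) : N = M := by
  rcases h.cases_head with rfl | ⟨C, hC, -⟩
  · rfl
  · exact absurd hC (hM C)

lemma Normal.eq_of_conv {M N : Term} (hM : Normal M) (hN : Normal N) (h : Conv M N) : M = N := by
  obtain ⟨Z, hMZ, hNZ⟩ := h.join
  rw [← hM.eq_of_reds hMZ, ← hN.eq_of_reds hNZ]

lemma normal_prop : Normal .prop := fun _ h => nomatch h

lemma normal_type (j : ℕ) : Normal (.type j) := fun _ h => nomatch h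

lemma Normal.pi {A B : Term} (hA : Normal A) (hB : Normal B) : Normal (.pi A B) := by
  intro C h
  cases h with
  | piL h => exact hA _ h
  | piR h => exact hB _ h

lemma Normal.sigma {A B : Term} (hA : Normal A) (hB : Normal B) : Normal (.sigma A B) := by
  intro C h
  cases h with
  | sigmaL h => exact hA _ h
  | sigmaR h => exact hB _ h

lemma hasNF_iff_exists_conv_normal {T : Term} : HasNF T ↔ ∃ N, Conv T N ∧ Normal N := by
  refine ⟨fun ⟨N, h, hN⟩ => ⟨N, Reds.conv h, hN⟩, fun ⟨N, h, hN⟩ => ?_⟩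
  obtain ⟨Z, hTZ, hNZ⟩ := h.join
  exact ⟨N, hN.eq_of_reds hNZ ▸ hTZ, hN⟩

lemma HasNF.of_conv {T T' : Term} (h : HasNF T) (hT : Conv T T') : HasNF T' := by
  obtain ⟨N, hTN, hN⟩ := hasNF_iff_exists_conv_normal.mp h
  exact hasNF_iff_exists_conv_normal.mpr ⟨N, hT.symm.trans hTN, hN⟩

lemma Reds.pi_inv {A B X : Term} (h : Reds (.pi A B) X) :
    ∃ A' B', X = .pi A' B' ∧ Reds A A' ∧ Reds B B' := by
  induction h with
  | refl => exact ⟨A, B, rfl, .refl, .refl⟩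
  | tail _ hX ih =>
    obtain ⟨A', B', rfl, hA, hB⟩ := ih
    cases hX with
    | piL h => exact ⟨_, _, rfl, hA.tail h, hB⟩
    | piR h => exact ⟨_, _, rfl, hA, hB.tail h⟩

lemma Reds.sigma_inv {A B X : Term} (h : Reds (.sigma A B) X) :
    ∃ A' B', X = .sigma A' B' ∧ Reds A A' ∧ Reds B B' := by
  induction h with
  | refl => exact ⟨A, B, rfl, .refl, .refl⟩
  | tail _ hX ih =>
    obtain ⟨A', B', rfl, hA, hB⟩ := ih
    cases hX with
    | sigmaL h => exact ⟨_, _, rfl, hA.tail h, hB⟩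
    | sigmaR h => exact ⟨_, _, rfl, hA, hB.tail h⟩

lemma hasNF_pi_iff {A B : Term} : HasNF (.pi A B) ↔ HasNF A ∧ HasNF B := by
  constructor
  · rintro ⟨X, h, hX⟩
    obtain ⟨A', B', rfl, hA, hB⟩ := Reds.pi_inv h
    exact ⟨⟨A', hA, fun _ h => hX _ (.piL h)⟩, ⟨B', hB, fun _ h => hX _ (.piR h)⟩⟩
  · rintro ⟨⟨A', hA, nA⟩, ⟨B', hB, nB⟩⟩
    exact ⟨.pi A' B', (Reds.map (.pi · B) Red.piL hA).trans (Reds.map (.pi A' ·) Red.piR hB),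
      Normal.pi nA nB⟩

lemma hasNF_sigma_iff {A B : Term} : HasNF (.sigma A B) ↔ HasNF A ∧ HasNF B := by
  constructor
  · rintro ⟨X, h, hX⟩
    obtain ⟨A', B', rfl, hA, hB⟩ := Reds.sigma_inv h
    exact ⟨⟨A', hA, fun _ h => hX _ (.sigmaL h)⟩, ⟨B', hB, fun _ h => hX _ (.sigmaR h)⟩⟩
  · rintro ⟨⟨A', hA, nA⟩, ⟨B', hB, nB⟩⟩
    exact ⟨.sigma A' B',
      (Reds.map (.sigma · B) Red.sigmaL hA).trans (Reds.map (.sigma A' ·) Red.sigmaR hB),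
      Normal.sigma nA nB⟩

end NormalForms

section Rank

def Term.rank : Term → ℕ
  | .prop => 2
  | .type j => j + 3
  | .pi A B => A.rank * B.rank
  | .sigma A B => A.rank * B.rank
  | _ => 1

lemma Term.rank_pos (T : Term) : 0 < T.rank := by
  induction T <;> simp [rank, *]

open Classical in
noncomputable def nfRank (T : Term) : ℕ :=
  if h : ∃ N, Conv T N ∧ Normal N then h.choose.rank else 0

lemma nfRank_eq {T N : Term} (hTN : Conv T N) (hN : Normal N) : nfRank T = N.rank := by
  have h : ∃ N, Conv T N ∧ Normal N := ⟨N, hTN, hN⟩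
  have hchoose : h.choose = N :=
    h.choose_spec.2.eq_of_conv hN (h.choose_spec.1.symm.trans hTN)
  rw [nfRank, dif_pos h, hchoose]

lemma nfRank_congr {T T' : Term} (h : Conv T T') : nfRank T = nfRank T' := by
  by_cases hT' : ∃ N, Conv T' N ∧ Normal N
  · obtain ⟨N, hT'N, hN⟩ := hT'
    rw [nfRank_eq (h.trans hT'N) hN, nfRank_eq hT'N hN]
  · have hT : ¬ ∃ N, Conv T N ∧ Normal N := fun ⟨N, hTN, hN⟩ =>
      hT' ⟨N, h.symm.trans hTN, hN⟩
    rw [nfRank, dif_neg hT, nfRank, dif_neg hT']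

lemma nfRank_pos {T : Term} (h : HasNF T) : 0 < nfRank T := by
  obtain ⟨N, hTN, hN⟩ := h
  rw [nfRank_eq (Reds.conv hTN) hN]
  exact N.rank_pos

lemma nfRank_pi {A B : Term} (hA : HasNF A) (hB : HasNF B) :
    nfRank (.pi A B) = nfRank A * nfRank B := by
  obtain ⟨A', hAA', nA⟩ := hA
  obtain ⟨B', hBB', nB⟩ := hB
  rw [nfRank_eq ((Reds.conv hAA').pi (Reds.conv hBB')) (Normal.pi nA nB),
    nfRank_eq (Reds.conv hAA') nA, nfRank_eq (Reds.conv hBB') nB, Term.rank]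

lemma nfRank_sigma {A B : Term} (hA : HasNF A) (hB : HasNF B) :
    nfRank (.sigma A B) = nfRank A * nfRank B := by
  obtain ⟨A', hAA', nA⟩ := hA
  obtain ⟨B', hBB', nB⟩ := hB
  rw [nfRank_eq ((Reds.conv hAA').sigma (Reds.conv hBB')) (Normal.sigma nA nB),
    nfRank_eq (Reds.conv hAA') nA, nfRank_eq (Reds.conv hBB') nB, Term.rank]

end Rank

lemma Cum.hasNF {A B : Term} (h : Cum A B) (hA : HasNF A) : HasNF B := by
  induction h with
  | conv h => exact hA.of_conv h
  | propType => exact ⟨_, .refl, normal_type 0⟩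
  | typeType => exact ⟨_, .refl, normal_type _⟩
  | pi hAA' _ ih =>
    rw [hasNF_pi_iff] at hA ⊢
    exact ⟨hA.1.of_conv hAA', ih hA.2⟩
  | sigma _ _ ihA ihB =>
    rw [hasNF_sigma_iff] at hA ⊢
    exact ⟨ihA hA.1, ihB hA.2⟩
  | trans _ _ ih₁ ih₂ => exact ih₂ (ih₁ hA)

lemma Cum.conv_or_nfRank_lt {A B : Term} (h : Cum A B) (hA : HasNF A) :
    Conv A B ∨ nfRank A < nfRank B := by
  induction h with
  | conv h => exact .inl h
  | propType =>
    right
    rw [nfRank_eq (.refl _) normal_prop, nfRank_eq (.refl _) (normal_type 0)]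
    decide
  | @typeType j k hjk =>
    rcases hjk.eq_or_lt with rfl | hlt
    · exact .inl (.refl _)
    · right
      rw [nfRank_eq (.refl _) (normal_type j), nfRank_eq (.refl _) (normal_type k)]
      exact Nat.add_lt_add_right hlt 3
  | pi hAA' hBB' ih =>
    obtain ⟨hA₁, hB₁⟩ := hasNF_pi_iff.mp hA
    refine (ih hB₁).imp hAA'.pi fun hlt => ?_
    rw [nfRank_pi hA₁ hB₁, nfRank_pi (hA₁.of_conv hAA') (hBB'.hasNF hB₁),
      ← nfRank_congr hAA']
    exact Nat.mul_lt_mul_of_pos_left hlt (nfRank_pos hA₁)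
  | sigma hAA' hBB' ihA ihB =>
    obtain ⟨hA₁, hB₁⟩ := hasNF_sigma_iff.mp hA
    rcases ihA hA₁ with cA | ltA <;> rcases ihB hB₁ with cB | ltB
    · exact .inl (cA.sigma cB)
    all_goals
      right
      rw [nfRank_sigma hA₁ hB₁, nfRank_sigma (hAA'.hasNF hA₁) (hBB'.hasNF hB₁)]
    · rw [nfRank_congr cA]
      exact Nat.mul_lt_mul_of_pos_left ltB (nfRank_pos (hAA'.hasNF hA₁))
    · rw [nfRank_congr cB]
      exact Nat.mul_lt_mul_of_pos_right ltA (nfRank_pos (hBB'.hasNF hB₁))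
    · exact Nat.mul_lt_mul'' ltA ltB
  | trans h₁ _ ih₁ ih₂ =>
    rcases ih₁ hA with c₁ | lt₁ <;> rcases ih₂ (h₁.hasNF hA) with c₂ | lt₂
    · exact .inl (c₁.trans c₂)
    · exact .inr ((nfRank_congr c₁).trans_lt lt₂)
    · exact .inr (lt₁.trans_eq (nfRank_congr c₂))
    · exact .inr (lt₁.trans lt₂)

lemma SCum.nfRank_lt {A B : Term} (h : SCum A B) (hA : HasNF A) : nfRank A < nfRank B :=
  (h.1.conv_or_nfRank_lt hA).resolve_left h.2

end ECC

/-- the cumulativity relation of ECC is well-founded on the set of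
normalisable terms: there is no infinite strictly decreasing sequence `A 0 ≻ A 1 ≻ …`
in which every `A n` has a normal form. -/
theorem no_infinite_descending_chain_of_normalisable_terms :
    ¬ ∃ A : ℕ → ECC.Term,
        (∀ n, ECC.HasNF (A n)) ∧ (∀ n, ECC.SCum (A (n+1)) (A n)) := by
  rintro ⟨A, hNF, hdesc⟩
  obtain ⟨n, hn⟩ := WellFounded.not_rel_apply_succ (r := (· < ·)) (ECC.nfRank ∘ A)
  exact hn ((hdesc n).nfRank_lt (hNF (n + 1)))
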